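/- Let L ∈ {ALC, ALCI} and let E = (E⁺, E⁻) be a collection of labeled ABox examples with E⁻ = {A₁, …, Aₙ}. Then E admits a fitting L-ontology (an L-ontology consistent with every ABox in E⁺ and inconsistent with every ABox in E⁻) if and only if for every i with 1 ≤ i ≤ n, the collection (E⁺, {Aᵢ}) admits a fitting L-ontology. -/

import Mathlib

/-!
Formalization background for "Fitting Ontologies to ABox-Query Examples":
description logics ALC / ALCI / ALCQ, ABoxes, interpretations (with standard
names assumption), ontologies, queries (AQ / CQ / full CQ / UCQ), fitting
problems, homomorphisms, forest models, unravelings, etc.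
-/

namespace DLFit

/-- Roles: role names and inverse roles (both indexed by natural numbers). -/
inductive DLRole : Type
  | name (r : ℕ)
  | inv (r : ℕ)
deriving DecidableEq

/-- Concepts of ALCIQ, a common superlanguage of ALC, ALCI and ALCQ. -/
inductive Concept : Type
  | top
  | atom (A : ℕ)
  | neg (C : Concept)
  | inter (C D : Concept)
  | ex (r : DLRole) (C : Concept)
  | atLeast (n : ℕ) (r : DLRole) (C : Concept)
  | atMost (n : ℕ) (r : DLRole) (C : Concept)
deriving DecidableEq

/-- A concept uses no inverse roles. -/
def Concept.invFree : Concept → Prop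
  | .top => True
  | .atom _ => True
  | .neg C => C.invFree
  | .inter C D => C.invFree ∧ D.invFree
  | .ex r C => (∃ m, r = DLRole.name m) ∧ C.invFree
  | .atLeast _ r C => (∃ m, r = DLRole.name m) ∧ C.invFree
  | .atMost _ r C => (∃ m, r = DLRole.name m) ∧ C.invFree

/-- A concept uses no qualified number restrictions. -/
def Concept.countFree : Concept → Prop
  | .top => True
  | .atom _ => True
  | .neg C => C.countFree
  | .inter C D => C.countFree ∧ D.countFree
  | .ex _ C => C.countFree
  | .atLeast _ _ _ => False
  | .atMost _ _ _ => False

/-- An ontology is a finite set of concept inclusions `C ⊑ D`. -/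
abbrev Ontology := Finset (Concept × Concept)

/-- The two ontology languages considered: ALC and ALCI. -/
inductive DL : Type
  | alc
  | alci
deriving DecidableEq

/-- Membership of an ontology in ALC resp. ALCI. -/
def OntologyInLang : DL → Ontology → Prop
  | .alc, O => ∀ ci ∈ O, ci.1.invFree ∧ ci.1.countFree ∧ ci.2.invFree ∧ ci.2.countFree
  | .alci, O => ∀ ci ∈ O, ci.1.countFree ∧ ci.2.countFree

/-- An ALCQ-ontology: no inverse roles (number restrictions allowed). -/
def OntologyIsALCQ (O : Ontology) : Prop := ∀ ci ∈ O, ci.1.invFree ∧ ci.2.invFree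

/-- ABox assertions `A(a)` and `r(a,b)`. -/
inductive Assertion : Type
  | conc (A : ℕ) (a : ℕ)
  | role (r : ℕ) (a b : ℕ)
deriving DecidableEq

/-- An ABox is a finite set of assertions. -/
abbrev ABox := Finset Assertion

def AssertionInds : Assertion → Finset ℕ
  | .conc _ a => {a}
  | .role _ a b => {a, b}

/-- The individual names occurring in an ABox. -/
def ABoxInds (A : ABox) : Finset ℕ := A.biUnion AssertionInds

def AssertionCNs : Assertion → Finset ℕ
  | .conc P _ => {P}
  | .role _ _ _ => ∅

/-- The concept names occurring in an ABox. -/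
def ABoxCNs (A : ABox) : Finset ℕ := A.biUnion AssertionCNs

/-- An interpretation, with the standard names assumption: every individual
name denotes itself, i.e. the (injective) map `indI` embeds the individual
names into the domain. -/
structure Interp : Type 1 where
  Dom : Type
  indI : ℕ → Dom
  indI_inj : Function.Injective indI
  concI : ℕ → Set Dom
  roleI : ℕ → Set (Dom × Dom)

/-- Semantics of (possibly inverse) roles. -/
def Interp.rSem (I : Interp) : DLRole → Set (I.Dom × I.Dom)
  | .name r => I.roleI r
  | .inv r => {p | (p.2, p.1) ∈ I.roleI r}

/-- Semantics of concepts. -/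
def Interp.cSem (I : Interp) : Concept → Set I.Dom
  | .top => Set.univ
  | .atom A => I.concI A
  | .neg C => (I.cSem C)ᶜ
  | .inter C D => I.cSem C ∩ I.cSem D
  | .ex r C => {d | ∃ e, (d, e) ∈ I.rSem r ∧ e ∈ I.cSem C}
  | .atLeast n r C => {d | (n : ℕ∞) ≤ {e | (d, e) ∈ I.rSem r ∧ e ∈ I.cSem C}.encard}
  | .atMost n r C => {d | {e | (d, e) ∈ I.rSem r ∧ e ∈ I.cSem C}.encard ≤ (n : ℕ∞)}

/-- `I` is a model of the ontology `O`. -/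
def Interp.IsModelOf (I : Interp) (O : Ontology) : Prop :=
  ∀ ci ∈ O, I.cSem ci.1 ⊆ I.cSem ci.2

def Interp.SatAssertion (I : Interp) : Assertion → Prop
  | .conc P a => I.indI a ∈ I.concI P
  | .role r a b => (I.indI a, I.indI b) ∈ I.roleI r

/-- `I` is a model of the ABox `A` (individual names interpreted as themselves). -/
def Interp.SatABox (I : Interp) (A : ABox) : Prop := ∀ α ∈ A, I.SatAssertion α

/-- An ABox is consistent with an ontology if they have a common model. -/
def ConsistentWith (A : ABox) (O : Ontology) : Prop :=
  ∃ I : Interp, I.IsModelOf O ∧ I.SatABox A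

/-- Homomorphism between ABoxes (need not fix individual names). -/
def ABoxHom (h : ℕ → ℕ) (A B : ABox) : Prop :=
  (∀ P a, Assertion.conc P a ∈ A → Assertion.conc P (h a) ∈ B) ∧
  (∀ r a b, Assertion.role r a b ∈ A → Assertion.role r (h a) (h b) ∈ B)

/-- Homomorphism from an ABox into an interpretation. -/
def ABoxIHom (I : Interp) (h : ℕ → I.Dom) (A : ABox) : Prop :=
  (∀ P a, Assertion.conc P a ∈ A → h a ∈ I.concI P) ∧
  (∀ r a b, Assertion.role r a b ∈ A → (h a, h b) ∈ I.roleI r)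

/-- Local injectivity of a homomorphism on an ABox. -/
def LocInj {D : Type} (h : ℕ → D) (A : ABox) : Prop :=
  ∀ r a b c, Assertion.role r a b ∈ A → Assertion.role r a c ∈ A → h b = h c → b = c

/-- The ABoxes in a collection of examples have pairwise disjoint individual names. -/
def PairwiseDisjInds (S : Finset ABox) : Prop :=
  ∀ A ∈ S, ∀ B ∈ S, A ≠ B → Disjoint (ABoxInds A) (ABoxInds B)

/-! ## Queries -/

/-- Terms of a query: variables and individual names. -/
inductive Term : Type
  | var (x : ℕ)
  | ind (a : ℕ)
deriving DecidableEq

/-- Atoms of a query. -/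
inductive Atom : Type
  | catom (A : ℕ) (t : Term)
  | ratom (r : ℕ) (t t' : Term)
deriving DecidableEq

/-- A (Boolean) conjunctive query, viewed as its finite set of atoms;
all variables are (implicitly) existentially quantified. -/
abbrev CQ := Finset Atom

/-- A union of conjunctive queries. -/
abbrev UCQ := Finset CQ

def TermInds : Term → Finset ℕ
  | .var _ => ∅
  | .ind a => {a}

def AtomInds : Atom → Finset ℕ
  | .catom _ t => TermInds t
  | .ratom _ t t' => TermInds t ∪ TermInds t'

/-- Individual names occurring in a CQ. -/
def CQInds (q : CQ) : Finset ℕ := q.biUnion AtomInds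

def UCQInds (q : UCQ) : Finset ℕ := q.biUnion CQInds

def AtomCNs : Atom → Finset ℕ
  | .catom P _ => {P}
  | .ratom _ _ _ => ∅

/-- Concept names occurring in a CQ. -/
def CQCNs (q : CQ) : Finset ℕ := q.biUnion AtomCNs

def UCQCNs (q : UCQ) : Finset ℕ := q.biUnion CQCNs

def AtomGround : Atom → Prop
  | .catom _ t => ∃ a, t = Term.ind a
  | .ratom _ t t' => (∃ a, t = Term.ind a) ∧ (∃ a, t' = Term.ind a)

/-- A full CQ: no (existentially quantified) variables. -/
def CQIsFull (q : CQ) : Prop := ∀ α ∈ q, AtomGround α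

def TermEval (I : Interp) (v : ℕ → I.Dom) : Term → I.Dom
  | .var x => v x
  | .ind a => I.indI a

def Interp.SatAtom (I : Interp) (v : ℕ → I.Dom) : Atom → Prop
  | .catom P t => TermEval I v t ∈ I.concI P
  | .ratom r t t' => (TermEval I v t, TermEval I v t') ∈ I.roleI r

/-- `I ⊨ q` for a CQ `q`: there is a (strong) homomorphism of the atoms of `q`
into `I` that is the identity on individual names. -/
def Interp.SatCQ (I : Interp) (q : CQ) : Prop :=
  ∃ v : ℕ → I.Dom, ∀ α ∈ q, I.SatAtom v α

/-- `I ⊨ q` for a UCQ `q`: some disjunct is satisfied. -/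
def Interp.SatUCQ (I : Interp) (q : UCQ) : Prop := ∃ p ∈ q, I.SatCQ p

/-- `A ∪ O ⊨ Q(a)` for an atomic query. -/
def EntailsAQ (A : ABox) (O : Ontology) (Q a : ℕ) : Prop :=
  ∀ I : Interp, I.IsModelOf O → I.SatABox A → I.indI a ∈ I.concI Q

/-- `A ∪ O ⊨ q` for a CQ. -/
def EntailsCQ (A : ABox) (O : Ontology) (q : CQ) : Prop :=
  ∀ I : Interp, I.IsModelOf O → I.SatABox A → I.SatCQ q

/-- `A ∪ O ⊨ q` for a UCQ. -/
def EntailsUCQ (A : ABox) (O : Ontology) (q : UCQ) : Prop :=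
  ∀ I : Interp, I.IsModelOf O → I.SatABox A → I.SatUCQ q

/-! ## Examples and fitting -/

/-- An ABox-AQ example `(𝒜, Q(a))`. -/
abbrev AQEx := ABox × ℕ × ℕ

/-- An ABox-CQ (in particular, ABox-FullCQ) example `(𝒜, q)`. -/
abbrev CQEx := ABox × CQ

/-- An ABox-UCQ example `(𝒜, q)`. -/
abbrev UEx := ABox × UCQ

/-- `O` fits a collection of labeled ABox(-consistency) examples. -/
def FitsCons (O : Ontology) (Ep En : Finset ABox) : Prop :=
  (∀ A ∈ Ep, ConsistentWith A O) ∧ (∀ A ∈ En, ¬ ConsistentWith A O)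

/-- `O` fits a collection of labeled ABox-AQ examples. -/
def FitsAQ (O : Ontology) (Ep En : Finset AQEx) : Prop :=
  (∀ e ∈ Ep, EntailsAQ e.1 O e.2.1 e.2.2) ∧ (∀ e ∈ En, ¬ EntailsAQ e.1 O e.2.1 e.2.2)

/-- `O` fits a collection of labeled ABox-CQ examples. -/
def FitsCQ (O : Ontology) (Ep En : Finset CQEx) : Prop :=
  (∀ e ∈ Ep, EntailsCQ e.1 O e.2) ∧ (∀ e ∈ En, ¬ EntailsCQ e.1 O e.2)

/-- `O` fits a collection of labeled ABox-UCQ examples. -/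
def FitsUCQ (O : Ontology) (Ep En : Finset UEx) : Prop :=
  (∀ e ∈ Ep, EntailsUCQ e.1 O e.2) ∧ (∀ e ∈ En, ¬ EntailsUCQ e.1 O e.2)

/-- An example `(A, q)` is inconsistent if every ALCI-ontology `O` with
`A ∪ O ⊨ q` is inconsistent with `A`. -/
def InconsistentEx (A : ABox) (q : CQ) : Prop :=
  ∀ O : Ontology, OntologyInLang DL.alci O → EntailsCQ A O q → ¬ ConsistentWith A O

/-! ## Completions and refutation candidates -/

/-- The disjoint union `A⁻` of the ABoxes of the negative AQ examples
(the ABoxes of a collection have pairwise disjoint individual names, so the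
disjoint union is the plain union). -/
def NegUnionAQ (En : Finset AQEx) : ABox := En.sup Prod.fst

/-- The disjoint union `A⁻` of the ABoxes of the negative CQ examples. -/
def NegUnionCQ (En : Finset CQEx) : ABox := En.sup Prod.fst

/-- A completion for a collection of ABox-AQ examples: extends `A⁻` by concept
assertions `Q(b)` with `b ∈ ind(A⁻)` and `Q` occurring as an AQ in `E⁺`. -/
def IsCompletionAQ (Ep En : Finset AQEx) (C : ABox) : Prop :=
  NegUnionAQ En ⊆ C ∧
  ∀ α ∈ C, α ∈ NegUnionAQ En ∨
    ∃ Q b, α = Assertion.conc Q b ∧ b ∈ ABoxInds (NegUnionAQ En) ∧ ∃ e ∈ Ep, e.2.1 = Q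

/-- Refutation candidates for a collection of ABox-AQ examples. -/
inductive RefCandAQ (Ep : Finset AQEx) (base : ABox) : ABox → Prop
  | base : RefCandAQ Ep base base
  | step {C : ABox} {A : ABox} {Q a : ℕ} {h : ℕ → ℕ} :
      RefCandAQ Ep base C → (A, Q, a) ∈ Ep → ABoxHom h A C →
      RefCandAQ Ep base (insert (Assertion.conc Q (h a)) C)

/-- A completion for a collection of ABox-FullCQ examples: extends `A⁻` by
concept assertions `Q(b)` with `b ∈ ind(A⁻)` and `Q` occurring in a query of a
positive example. -/
def IsCompletionCQ (Ep En : Finset CQEx) (C : ABox) : Prop :=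
  NegUnionCQ En ⊆ C ∧
  ∀ α ∈ C, α ∈ NegUnionCQ En ∨
    ∃ Q b, α = Assertion.conc Q b ∧ b ∈ ABoxInds (NegUnionCQ En) ∧ ∃ e ∈ Ep, Q ∈ CQCNs e.2

/-- Refutation candidates for a collection of ABox-FullCQ examples. -/
inductive RefCandCQ (Ep : Finset CQEx) (base : ABox) : ABox → Prop
  | base : RefCandCQ Ep base base
  | step {C : ABox} {A : ABox} {q : CQ} {Q a : ℕ} {h : ℕ → ℕ} :
      RefCandCQ Ep base C → (A, q) ∈ Ep → ¬ InconsistentEx A q → ABoxHom h A C →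
      Atom.catom Q (Term.ind a) ∈ q →
      RefCandCQ Ep base (insert (Assertion.conc Q (h a)) C)

/-! ## Forest models, unravelings and `I_{A,h,L}` -/

/-- The edge relation of the graph of a forest model: some role edge, excluding
pairs of ABox individuals. -/
def ForestEdge (I : Interp) (A : ABox) (d e : I.Dom) : Prop :=
  (∃ r, (d, e) ∈ I.roleI r) ∧
  ¬ ∃ a ∈ ABoxInds A, ∃ b ∈ ABoxInds A, d = I.indI a ∧ e = I.indI b

/-- The undirected version of the graph of a forest model. -/
def ForestGraph (I : Interp) (A : ABox) : SimpleGraph I.Dom where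
  Adj d e := d ≠ e ∧ (ForestEdge I A d e ∨ ForestEdge I A e d)
  symm := ⟨fun _ _ h => ⟨h.1.symm, h.2.symm⟩⟩
  loopless := ⟨fun _ h => h.1 rfl⟩

/-- `I` is an `L`-forest model of the ABox `A`:
it is a model of `A`; role edges among ABox individuals are exactly those
asserted in `A`; and the remaining role edges form a forest (for ALC a
directed forest whose edges point away from the roots, for ALCI an
undirected forest). -/
def IsForestModel (L : DL) (I : Interp) (A : ABox) : Prop :=
  I.SatABox A ∧
  (∀ r a b, a ∈ ABoxInds A → b ∈ ABoxInds A →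
    ((I.indI a, I.indI b) ∈ I.roleI r ↔ Assertion.role r a b ∈ A)) ∧
  (match L with
    | DL.alc =>
        (∀ e : I.Dom, {d : I.Dom | ForestEdge I A d e}.Subsingleton) ∧
        WellFounded (fun d e : I.Dom => ForestEdge I A d e)
    | DL.alci =>
        (∀ d : I.Dom, ¬ ForestEdge I A d d) ∧ (ForestGraph I A).IsAcyclic)

/-- `e` is a neighbor of `d` in `I`. -/
def Neighbor (I : Interp) (d e : I.Dom) : Prop :=
  ∃ r, (d, e) ∈ I.roleI r ∨ (e, d) ∈ I.roleI r

/-- The degree of `I` (maximal number of neighbors) is at most `n`. -/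
def DegreeLE (I : Interp) (n : ℕ) : Prop :=
  ∀ d : I.Dom, ∃ s : Finset I.Dom, s.card ≤ n ∧ ∀ e : I.Dom, Neighbor I d e → e ∈ s

/-- The disjoint union of a family of interpretations (`pick` chooses, for
every individual name, the component interpreting it). -/
def Interp.disjUnion {ι : Type} (J : ι → Interp) (pick : ℕ → ι) : Interp where
  Dom := Σ i : ι, (J i).Dom
  indI := fun n => ⟨pick n, (J (pick n)).indI n⟩
  indI_inj := by
    intro m n hmn
    obtain ⟨h1, h2⟩ := Sigma.ext_iff.mp hmn
    dsimp only at h1 h2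
    rw [h1] at h2
    exact (J (pick n)).indI_inj (eq_of_heq h2)
  concI := fun P => {x | x.2 ∈ (J x.1).concI P}
  roleI := fun r => {p | ∃ (i : ι) (d e : (J i).Dom),
    p = (⟨i, d⟩, ⟨i, e⟩) ∧ (d, e) ∈ (J i).roleI r}

/-- `l` is a path in `I` starting at `d` (for `L = ALC`, only role names may
occur on the path; for `L = ALCI` also inverse roles). -/
def IsPathFrom (L : DL) (I : Interp) : I.Dom → List (DLRole × I.Dom) → Prop
  | _, [] => True
  | d, (r, e) :: l =>
      (d, e) ∈ I.rSem r ∧ (L = DL.alc → ∃ m, r = DLRole.name m) ∧ IsPathFrom L I e l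

/-- The tail (last element) of a path starting at `d`. -/
def PathTail (I : Interp) (d : I.Dom) (l : List (DLRole × I.Dom)) : I.Dom :=
  (l.getLast?).elim d Prod.snd

/-- Domain of `I_{A,h,L}`: individual names plus, for every individual name,
paths in `I` (elements not corresponding to `ind(A)` or to valid nonempty
paths are unlabeled and isolated junk). -/
abbrev IAhDom (I : Interp) : Type := ℕ ⊕ (ℕ × List (DLRole × I.Dom))

/-- The element of `I_{A,h,L}` given by the path `l` attached at individual
`a`; the root (empty path) is identified with `a` itself. -/
def IAhNode (I : Interp) (a : ℕ) : List (DLRole × I.Dom) → IAhDom I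
  | [] => Sum.inl a
  | l => Sum.inr (a, l)

/-- Validity of a path attached at `a` in `I_{A,h,L}`. -/
def IAhValid (L : DL) (I : Interp) (A : ABox) (h : ℕ → I.Dom)
    (a : ℕ) (l : List (DLRole × I.Dom)) : Prop :=
  a ∈ ABoxInds A ∧ IsPathFrom L I (h a) l

/-- The interpretation `I_{A,h,L}`: start from the interpretation with domain
`ind(A)`, concept memberships induced from `I` via `h`, and role edges exactly
the role assertions of `A`; then disjointly attach, for every `a ∈ ind(A)`,
the `L`-unraveling of `I` at `h(a)`, identifying its root with `a`. -/
def IAh (L : DL) (I : Interp) (A : ABox) (h : ℕ → I.Dom) : Interp where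
  Dom := IAhDom I
  indI := Sum.inl
  indI_inj := Sum.inl_injective
  concI := fun P => {x : IAhDom I |
    (∃ a, x = Sum.inl a ∧ a ∈ ABoxInds A ∧ h a ∈ I.concI P) ∨
    (∃ a l, x = Sum.inr (a, l) ∧ l ≠ [] ∧ IAhValid L I A h a l ∧
      PathTail I (h a) l ∈ I.concI P)}
  roleI := fun r => {p : IAhDom I × IAhDom I |
    (∃ a b, p.1 = Sum.inl a ∧ p.2 = Sum.inl b ∧ Assertion.role r a b ∈ A) ∨
    (∃ a l e, IAhValid L I A h a (l ++ [(DLRole.name r, e)]) ∧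
      p.1 = IAhNode I a l ∧ p.2 = IAhNode I a (l ++ [(DLRole.name r, e)])) ∨
    (∃ a l e, IAhValid L I A h a (l ++ [(DLRole.inv r, e)]) ∧
      p.1 = IAhNode I a (l ++ [(DLRole.inv r, e)]) ∧ p.2 = IAhNode I a l)}

/-- Restriction of an interpretation to the elements satisfying `P`
(elements outside `P` become unlabeled and isolated). -/
def Interp.restrictP (I : Interp) (P : I.Dom → Prop) : Interp where
  Dom := I.Dom
  indI := I.indI
  indI_inj := I.indI_inj
  concI := fun Q => {d | d ∈ I.concI Q ∧ P d}
  roleI := fun r => {p | p ∈ I.roleI r ∧ P p.1 ∧ P p.2}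

/-- Depth of elements of `I_{A,h,L}` (ABox individuals have depth 0). -/
def IAhDepthLE (I : Interp) (n : ℕ) : IAhDom I → Prop
  | Sum.inl _ => True
  | Sum.inr al => al.2.length ≤ n

/-! ## Sizes -/

/-- Size of a UCQ (number of atoms). -/
def UCQSize (q : UCQ) : ℕ := q.sum Finset.card

/-- Size of an ABox-UCQ example. -/
def UExSize (e : UEx) : ℕ := e.1.card + UCQSize e.2

/-- Size `||E||` of a collection of ABox-UCQ examples. -/
def ESize (Ep En : Finset UEx) : ℕ := Ep.sum UExSize + En.sum UExSize

/-- The (exponential) bound `bound(E)` on the degree: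
`||E⁻||` plus the sum over positive examples `(A,q)` of `(||(A,q)||+1)^{||q||}`. -/
def EBound (Ep En : Finset UEx) : ℕ :=
  En.sum UExSize + Ep.sum (fun e => (UExSize e + 1) ^ UCQSize e.2)

/-! ## Connectivity, components, variations -/

def ABoxAdj (A : ABox) (a b : ℕ) : Prop :=
  ∃ r, Assertion.role r a b ∈ A ∨ Assertion.role r b a ∈ A

/-- Connectivity of individuals in an ABox. -/
def ABoxConn (A : ABox) : ℕ → ℕ → Prop := Relation.ReflTransGen (ABoxAdj A)

/-- `B` is a maximally connected component of the ABox `A`. -/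
def IsComponent (B A : ABox) : Prop :=
  ∃ a ∈ ABoxInds A, ∀ α : Assertion,
    α ∈ B ↔ α ∈ A ∧ ∀ c ∈ AssertionInds α, ABoxConn A a c

def AtomTerms : Atom → Finset Term
  | .catom _ t => {t}
  | .ratom _ t t' => {t, t'}

/-- The terms (variables and individuals) occurring in a CQ. -/
def CQTerms (q : CQ) : Finset Term := q.biUnion AtomTerms

def CQAdj (q : CQ) (t t' : Term) : Prop :=
  ∃ r, Atom.ratom r t t' ∈ q ∨ Atom.ratom r t' t ∈ q

/-- A CQ is connected. -/
def CQConnected (q : CQ) : Prop :=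
  ∀ t ∈ CQTerms q, ∀ t' ∈ CQTerms q, Relation.ReflTransGen (CQAdj q) t t'

def SubstTerm (σ : ℕ → Term) : Term → Term
  | .var x => σ x
  | .ind a => Term.ind a

def SubstAtom (σ : ℕ → Term) : Atom → Atom
  | .catom P t => Atom.catom P (SubstTerm σ t)
  | .ratom r t t' => Atom.ratom r (SubstTerm σ t) (SubstTerm σ t')

/-- An `A`-variation of a CQ `p`: consistently replace zero or more variables by
individual names from `ind(A)` and possibly identify variables. -/
def IsVariation (A : ABox) (p p' : CQ) : Prop :=
  ∃ σ : ℕ → Term,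
    (∀ x : ℕ, (∃ y, σ x = Term.var y) ∨ ∃ a ∈ ABoxInds A, σ x = Term.ind a) ∧
    p' = p.image (SubstAtom σ)

def Assertion.toAtom : Assertion → Atom
  | .conc P a => Atom.catom P (Term.ind a)
  | .role r a b => Atom.ratom r (Term.ind a) (Term.ind b)

/-- The interpretation `I_q` induced by a CQ. -/
def CQInterp (p : CQ) : Interp where
  Dom := Term
  indI := Term.ind
  indI_inj := fun _ _ hab => Term.ind.inj hab
  concI := fun P => {t | Atom.catom P t ∈ p}
  roleI := fun r => {tt | Atom.ratom r tt.1 tt.2 ∈ p}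

/-- A proper `A`-variation. -/
def IsProperVariation (L : DL) (A : ABox) (p p' : CQ) : Prop :=
  IsVariation A p p' ∧
  (∀ r a b, Atom.ratom r (Term.ind a) (Term.ind b) ∈ p' → Assertion.role r a b ∈ A) ∧
  IsForestModel L (CQInterp p') (A.filter fun α => α.toAtom ∈ p')

/-- A weak homomorphism from a CQ into an interpretation (need not be the
identity on individual names). -/
def WeakHom (I : Interp) (g : Term → I.Dom) (p : CQ) : Prop :=
  (∀ P t, Atom.catom P t ∈ p → g t ∈ I.concI P) ∧
  (∀ r t t', Atom.ratom r t t' ∈ p → (g t, g t') ∈ I.roleI r)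

def ReachStep (L : DL) (I : Interp) (d e : I.Dom) : Prop :=
  match L with
  | DL.alc => ∃ r, (d, e) ∈ I.roleI r
  | DL.alci => ∃ r, (d, e) ∈ I.roleI r ∨ (e, d) ∈ I.roleI r

/-- `L`-reachability in an interpretation. -/
def Reach (L : DL) (I : Interp) : I.Dom → I.Dom → Prop :=
  Relation.ReflTransGen (ReachStep L I)

/-- Compatibility of a weak homomorphism `g` (from `p'` to `I`) with a
homomorphism `h` (from `A` to `I`). -/
def CompatibleWith (L : DL) (I : Interp) (A : ABox) (h : ℕ → I.Dom)
    (p' : CQ) (g : Term → I.Dom) : Prop :=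
  (∀ a ∈ CQInds p', g (Term.ind a) = h a) ∧
  (∀ x : ℕ, Term.var x ∈ CQTerms p' →
    ∃ a ∈ ABoxInds A, Reach L I (h a) (g (Term.var x)))

/-- Query classes. -/
inductive QClass : Type
  | aq
  | fullcq
  | cq
  | ucq

/-- A UCQ belongs to a query class. -/
def UCQInClass : QClass → UCQ → Prop
  | .aq, q => ∃ Q a, q = {({Atom.catom Q (Term.ind a)} : CQ)}
  | .fullcq, q => ∃ p : CQ, q = {p} ∧ CQIsFull p
  | .cq, q => ∃ p : CQ, q = {p}
  | .ucq, _ => True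


/-! Over a nonempty `E⁺`, both sides say that no negative example maps homomorphically into
the union `B` of the positive examples.

Since the positive examples have disjoint individual names, the disjoint union of their
models (for a common ALCI-ontology `O`) is a model of `B`; and ALCI-concepts are invariant
under pulling a model back along a map of individual names, so a negative example that maps
into `B` is consistent with `O` as well.

Conversely, if no negative example maps into `B`, a fitting ALC-ontology says: every element
carries a label `N + b` naming an individual `b` of `B`, and no concept or role assertion of
the negative signature holds between labels unless `B` contains it. `B` itself, each
individual labelled by itself, is a model; in a model of a negative example the labels form
a homomorphism into `B`. -/

theorem OntologyInLang.to_alci {L : DL} {O : Ontology} (h : OntologyInLang L O) :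
    OntologyInLang .alci O := by
  cases L with
  | alc => exact fun ci hci => ⟨(h ci hci).2.1, (h ci hci).2.2.2⟩
  | alci => exact h

theorem OntologyInLang.of_alc (L : DL) {O : Ontology} (h : OntologyInLang .alc O) :
    OntologyInLang L O := by
  cases L with
  | alc => exact h
  | alci => exact h.to_alci

theorem PairwiseDisjInds.mono {S T : Finset ABox} (h : PairwiseDisjInds T) (hST : S ⊆ T) :
    PairwiseDisjInds S :=
  fun A hA B hB => h A (hST hA) B (hST hB)

def AssertionRNs : Assertion → Finset ℕ
  | .conc _ _ => ∅
  | .role r _ _ => {r}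

def ABoxRNs (A : ABox) : Finset ℕ := A.biUnion AssertionRNs

theorem mem_ABoxInds_of_conc {A : ABox} {P a : ℕ} (h : .conc P a ∈ A) : a ∈ ABoxInds A :=
  Finset.mem_biUnion.2 ⟨_, h, by simp [AssertionInds]⟩

theorem mem_ABoxInds_of_role_left {A : ABox} {r a b : ℕ} (h : .role r a b ∈ A) :
    a ∈ ABoxInds A :=
  Finset.mem_biUnion.2 ⟨_, h, by simp [AssertionInds]⟩

theorem mem_ABoxInds_of_role_right {A : ABox} {r a b : ℕ} (h : .role r a b ∈ A) :
    b ∈ ABoxInds A :=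
  Finset.mem_biUnion.2 ⟨_, h, by simp [AssertionInds]⟩

theorem mem_ABoxCNs_of_conc {A : ABox} {P a : ℕ} (h : .conc P a ∈ A) : P ∈ ABoxCNs A :=
  Finset.mem_biUnion.2 ⟨_, h, by simp [AssertionCNs]⟩

theorem mem_ABoxRNs_of_role {A : ABox} {r a b : ℕ} (h : .role r a b ∈ A) : r ∈ ABoxRNs A :=
  Finset.mem_biUnion.2 ⟨_, h, by simp [AssertionRNs]⟩

theorem ConsistentWith.of_subset {A B : ABox} {O : Ontology} (hB : ConsistentWith B O)
    (hAB : A ⊆ B) : ConsistentWith A O :=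
  let ⟨I, hI, hIB⟩ := hB
  ⟨I, hI, fun α hα => hIB α (hAB hα)⟩

section Disjunction

def Concept.bot : Concept := .neg .top

def Concept.union (C D : Concept) : Concept := .neg (.inter (.neg C) (.neg D))

def Concept.disj (l : List Concept) : Concept := l.foldr Concept.union Concept.bot

@[simp]
theorem Interp.cSem_bot (I : Interp) : I.cSem .bot = ∅ := by
  simp [Concept.bot, Interp.cSem]

@[simp]
theorem Interp.cSem_union (I : Interp) (C D : Concept) :
    I.cSem (C.union D) = I.cSem C ∪ I.cSem D := by
  simp [Concept.union, Interp.cSem, Set.compl_inter]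

theorem Interp.mem_cSem_disj {I : Interp} {l : List Concept} {d : I.Dom} :
    d ∈ I.cSem (Concept.disj l) ↔ ∃ C ∈ l, d ∈ I.cSem C := by
  induction l with
  | nil => simp [Concept.disj]
  | cons C l ih => simp [Concept.disj, ← ih]

theorem Concept.invFree_countFree_disj {l : List Concept}
    (h : ∀ C ∈ l, C.invFree ∧ C.countFree) : (disj l).invFree ∧ (disj l).countFree := by
  induction l with
  | nil => exact ⟨trivial, trivial⟩
  | cons C l ih =>
    obtain ⟨hl₁, hl₂⟩ := ih fun D hD => h D (List.mem_cons_of_mem _ hD)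
    exact ⟨⟨(h C List.mem_cons_self).1, hl₁⟩, ⟨(h C List.mem_cons_self).2, hl₂⟩⟩

theorem Interp.IsModelOf.notMem_cSem {I : Interp} {O : Ontology} (hI : I.IsModelOf O)
    {C : Concept} (hC : (C, .bot) ∈ O) {d : I.Dom} : d ∉ I.cSem C := fun hd => by
  simpa using hI _ hC hd

end Disjunction

section Invariance

/-- Every individual name `a` denotes a fresh copy of `f a`, with the same concept
memberships and role edges (in both directions). -/
def Interp.pullback (I : Interp) (f : ℕ → I.Dom) : Interp where
  Dom := I.Dom ⊕ ℕ
  indI := Sum.inr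
  indI_inj := Sum.inr_injective
  concI := fun P => {x | Sum.elim id f x ∈ I.concI P}
  roleI := fun r => {p | (Sum.elim id f p.1, Sum.elim id f p.2) ∈ I.roleI r}

theorem Interp.pullback_rSem (I : Interp) (f : ℕ → I.Dom) (R : DLRole)
    (p : (I.pullback f).Dom × (I.pullback f).Dom) :
    p ∈ (I.pullback f).rSem R ↔ (Sum.elim id f p.1, Sum.elim id f p.2) ∈ I.rSem R := by
  cases R <;> rfl

theorem Interp.pullback_cSem (I : Interp) (f : ℕ → I.Dom) {C : Concept} (hC : C.countFree)
    (x : (I.pullback f).Dom) : x ∈ (I.pullback f).cSem C ↔ Sum.elim id f x ∈ I.cSem C := by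
  induction C generalizing x with
  | top => simp [Interp.cSem]
  | atom A => rfl
  | neg C ih => exact not_congr (ih hC x)
  | inter C D ihC ihD => exact and_congr (ihC hC.1 x) (ihD hC.2 x)
  | ex r C ih =>
    constructor
    · rintro ⟨y, hy, hyC⟩
      exact ⟨Sum.elim id f y, (I.pullback_rSem f r (x, y)).1 hy, (ih hC y).1 hyC⟩
    · rintro ⟨e, he, heC⟩
      exact ⟨.inl e, (I.pullback_rSem f r (x, .inl e)).2 he, (ih hC (.inl e)).2 heC⟩
  | atLeast => exact hC.elim
  | atMost => exact hC.elim

theorem Interp.IsModelOf.pullback {I : Interp} {O : Ontology} (hO : OntologyInLang .alci O)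
    (hI : I.IsModelOf O) (f : ℕ → I.Dom) : (I.pullback f).IsModelOf O := fun ci hci x hx =>
  (I.pullback_cSem f (hO ci hci).2 x).2 (hI ci hci ((I.pullback_cSem f (hO ci hci).1 x).1 hx))

theorem ConsistentWith.of_aboxHom {O : Ontology} (hO : OntologyInLang .alci O)
    {A B : ABox} {h : ℕ → ℕ} (hh : ABoxHom h A B) (hB : ConsistentWith B O) :
    ConsistentWith A O := by
  obtain ⟨I, hI, hIB⟩ := hB
  refine ⟨I.pullback (I.indI ∘ h), hI.pullback hO _, ?_⟩
  rintro (⟨P, a⟩ | ⟨r, a, b⟩) hα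
  · exact hIB _ (hh.1 P a hα)
  · exact hIB _ (hh.2 r a b hα)

theorem Interp.disjUnion_rSem {ι : Type} (J : ι → Interp) (pick : ℕ → ι) (R : DLRole)
    {i : ι} {d : (J i).Dom} {y : Σ i, (J i).Dom} :
    ((⟨i, d⟩ : Σ i, (J i).Dom), y) ∈ (Interp.disjUnion J pick).rSem R ↔
      ∃ e : (J i).Dom, y = ⟨i, e⟩ ∧ (d, e) ∈ (J i).rSem R := by
  cases R with
  | name r =>
    constructor
    · rintro ⟨j, d', e', hp, hr⟩
      obtain ⟨h₁, rfl⟩ := Prod.mk.inj hp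
      obtain ⟨rfl, h₂⟩ := Sigma.mk.inj_iff.1 h₁
      cases eq_of_heq h₂
      exact ⟨e', rfl, hr⟩
    · rintro ⟨e, rfl, hr⟩
      exact ⟨i, d, e, rfl, hr⟩
  | inv r =>
    constructor
    · rintro ⟨j, d', e', hp, hr⟩
      obtain ⟨rfl, h₂⟩ := Prod.mk.inj hp
      obtain ⟨rfl, h₃⟩ := Sigma.mk.inj_iff.1 h₂
      cases eq_of_heq h₃
      exact ⟨d', rfl, hr⟩
    · rintro ⟨e, rfl, hr⟩
      exact ⟨i, e, d, rfl, hr⟩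

theorem Interp.disjUnion_cSem {ι : Type} (J : ι → Interp) (pick : ℕ → ι) {C : Concept}
    (hC : C.countFree) (i : ι) (d : (J i).Dom) :
    (⟨i, d⟩ : Σ i, (J i).Dom) ∈ (Interp.disjUnion J pick).cSem C ↔ d ∈ (J i).cSem C := by
  induction C generalizing i d with
  | top => exact Iff.rfl
  | atom A => rfl
  | neg C ih => exact not_congr (ih hC i d)
  | inter C D ihC ihD => exact and_congr (ihC hC.1 i d) (ihD hC.2 i d)
  | ex r C ih =>
    constructor
    · rintro ⟨y, hy, hyC⟩
      obtain ⟨e, rfl, hr⟩ := (disjUnion_rSem J pick r).1 hy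
      exact ⟨e, hr, (ih hC i e).1 hyC⟩
    · rintro ⟨e, hr, heC⟩
      exact ⟨⟨i, e⟩, (disjUnion_rSem J pick r).2 ⟨e, rfl, hr⟩, (ih hC i e).2 heC⟩
  | atLeast => exact hC.elim
  | atMost => exact hC.elim

theorem Interp.IsModelOf.disjUnion {ι : Type} {J : ι → Interp} {O : Ontology}
    (hO : OntologyInLang .alci O) (hJ : ∀ i, (J i).IsModelOf O) (pick : ℕ → ι) :
    (Interp.disjUnion J pick).IsModelOf O := by
  rintro ci hci ⟨i, d⟩ hd
  exact (disjUnion_cSem J pick (hO ci hci).2 i d).2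
    (hJ i ci hci ((disjUnion_cSem J pick (hO ci hci).1 i d).1 hd))

theorem Interp.disjUnion_indI_of_pick {ι : Type} (J : ι → Interp) {pick : ℕ → ι} {a : ℕ}
    {i : ι} (h : pick a = i) : (Interp.disjUnion J pick).indI a = ⟨i, (J i).indI a⟩ := by
  subst h
  rfl

theorem consistentWith_sup {S : Finset ABox} {O : Ontology} (hO : OntologyInLang .alci O)
    (hS : PairwiseDisjInds S) (hne : S.Nonempty) (hcons : ∀ X ∈ S, ConsistentWith X O) :
    ConsistentWith (S.sup id) O := by
  classical
  choose m hmO hmX using fun X : S => hcons X.1 X.2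
  obtain ⟨X₀, hX₀⟩ := hne
  let owner : ℕ → S := fun a =>
    if h : ∃ X : S, a ∈ ABoxInds X.1 then h.choose else ⟨X₀, hX₀⟩
  have owner_eq {X : S} {a : ℕ} (ha : a ∈ ABoxInds X.1) : owner a = X := by
    have h : ∃ X : S, a ∈ ABoxInds X.1 := ⟨X, ha⟩
    simp only [owner, dif_pos h]
    by_contra hne
    exact Finset.disjoint_left.1 (hS _ h.choose.2 _ X.2 (Subtype.coe_ne_coe.2 hne))
      h.choose_spec ha
  refine ⟨Interp.disjUnion m owner, .disjUnion hO hmO owner, ?_⟩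
  intro α hα
  obtain ⟨X, hX, hαX⟩ := Finset.mem_sup.1 hα
  rcases α with ⟨P, a⟩ | ⟨r, a, b⟩
  · show (Interp.disjUnion m owner).indI a ∈ _
    rw [Interp.disjUnion_indI_of_pick m (owner_eq (X := ⟨X, hX⟩) (mem_ABoxInds_of_conc hαX))]
    exact hmX ⟨X, hX⟩ _ hαX
  · show ((Interp.disjUnion m owner).indI a, (Interp.disjUnion m owner).indI b) ∈ _
    rw [Interp.disjUnion_indI_of_pick m (owner_eq (X := ⟨X, hX⟩) (mem_ABoxInds_of_role_left hαX)),
      Interp.disjUnion_indI_of_pick m (owner_eq (X := ⟨X, hX⟩) (mem_ABoxInds_of_role_right hαX))]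
    exact ⟨_, _, _, rfl, hmX ⟨X, hX⟩ _ hαX⟩

theorem not_exists_aboxHom_of_fitsCons {L : DL} {Ep : Finset ABox} {A : ABox} {O : Ontology}
    (hdisj : PairwiseDisjInds Ep) (hne : Ep.Nonempty) (hL : OntologyInLang L O)
    (hfit : FitsCons O Ep {A}) : ¬ ∃ h, ABoxHom h A (Ep.sup id) := fun ⟨_, hh⟩ =>
  hfit.2 A (Finset.mem_singleton_self A)
    ((consistentWith_sup hL.to_alci hdisj hne hfit.1).of_aboxHom hL.to_alci hh)

end Invariance

section HomOntology

variable (B : ABox) (SC SR : Finset ℕ) (N : ℕ)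

/-- Individual `0` labels the elements outside `ind(B)`; it is harmless, as such elements
carry no assertions. -/
def homLabels : Finset ℕ := insert 0 (ABoxInds B)

/-- The ontology forcing a homomorphism into `B` for ABoxes with concept names in `SC` and
role names in `SR`: the concept name `N + b` is the label of `b ∈ homLabels B`. -/
noncomputable def homOntology : Ontology :=
  insert (.top, .disj ((homLabels B).toList.map fun b => .atom (N + b)))
    ((((homLabels B ×ˢ SC).filter fun bP => Assertion.conc bP.2 bP.1 ∉ B).image fun bP =>
        (.inter (.atom (N + bP.1)) (.atom bP.2), .bot)) ∪
     ((((homLabels B ×ˢ homLabels B) ×ˢ SR).filter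
        fun x => Assertion.role x.2 x.1.1 x.1.2 ∉ B).image fun x =>
        (.inter (.atom (N + x.1.1)) (.ex (.name x.2) (.atom (N + x.1.2))), .bot)))

variable {B SC SR N}

theorem mem_homOntology {ci : Concept × Concept} :
    ci ∈ homOntology B SC SR N ↔
      ci = (.top, .disj ((homLabels B).toList.map fun b => .atom (N + b))) ∨
      (∃ b ∈ homLabels B, ∃ P ∈ SC, .conc P b ∉ B ∧
        ci = (.inter (.atom (N + b)) (.atom P), .bot)) ∨
      (∃ b ∈ homLabels B, ∃ b' ∈ homLabels B, ∃ r ∈ SR, .role r b b' ∉ B ∧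
        ci = (.inter (.atom (N + b)) (.ex (.name r) (.atom (N + b'))), .bot)) := by
  simp only [homOntology, Finset.mem_insert, Finset.mem_union, Finset.mem_image,
    Finset.mem_filter, Finset.mem_product, Prod.exists]
  aesop

theorem homOntology_inLang_alc : OntologyInLang .alc (homOntology B SC SR N) := by
  intro ci hci
  rcases mem_homOntology.1 hci with rfl | ⟨b, -, P, -, -, rfl⟩ | ⟨b, -, b', -, r, -, -, rfl⟩
  · have hlabels := Concept.invFree_countFree_disj (l := (homLabels B).toList.map
      fun b => .atom (N + b)) (by simp [Concept.invFree, Concept.countFree])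
    exact ⟨trivial, trivial, hlabels⟩
  · exact ⟨⟨trivial, trivial⟩, ⟨trivial, trivial⟩, trivial, trivial⟩
  · exact ⟨⟨trivial, ⟨r, rfl⟩, trivial⟩, ⟨trivial, trivial⟩, trivial, trivial⟩

theorem consistentWith_homOntology (hN : ∀ P ∈ ABoxCNs B ∪ SC, P < N) :
    ConsistentWith B (homOntology B SC SR N) := by
  let label : ℕ → ℕ := fun x => if x ∈ ABoxInds B then x else 0
  have label_mem (x : ℕ) : label x ∈ homLabels B := by
    by_cases hx : x ∈ ABoxInds B <;> simp [label, homLabels, hx]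
  let I : Interp :=
    { Dom := ℕ, indI := id, indI_inj := Function.injective_id
      concI := fun Q => {x | .conc Q x ∈ B ∨ Q = N + label x}
      roleI := fun r => {p | .role r p.1 p.2 ∈ B} }
  have eq_label {b x : ℕ} (hx : x ∈ I.concI (N + b)) : b = label x := by
    rcases hx with hx | hx
    · have := hN _ (Finset.mem_union_left _ (mem_ABoxCNs_of_conc hx))
      omega
    · omega
  refine ⟨I, fun ci hci x hx => ?_, ?_⟩
  · rcases mem_homOntology.1 hci with rfl | ⟨b, -, P, hP, hPb, rfl⟩ | ⟨b, -, b', -, r, -, hrb, rfl⟩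
    · exact Interp.mem_cSem_disj.2 ⟨.atom (N + label x),
        List.mem_map.2 ⟨label x, Finset.mem_toList.2 (label_mem x), rfl⟩, Or.inr rfl⟩
    · obtain ⟨hxb, hxP | hxP⟩ := hx
      · have hxB : x ∈ ABoxInds B := mem_ABoxInds_of_conc hxP
        simp only [eq_label hxb, label, if_pos hxB] at hPb
        exact (hPb hxP).elim
      · have := hN P (Finset.mem_union_right _ hP)
        omega
    · obtain ⟨hxb, e, hxe, heb'⟩ := hx
      change Assertion.role r x e ∈ B at hxe
      simp only [eq_label hxb, eq_label heb', label, if_pos (mem_ABoxInds_of_role_left hxe),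
        if_pos (mem_ABoxInds_of_role_right hxe)] at hrb
      exact (hrb hxe).elim
  · rintro (⟨P, a⟩ | ⟨r, a, b⟩) hα
    · exact Or.inl hα
    · exact hα

theorem exists_aboxHom_of_consistentWith_homOntology {A : ABox} (hSC : ABoxCNs A ⊆ SC)
    (hSR : ABoxRNs A ⊆ SR) (hA : ConsistentWith A (homOntology B SC SR N)) :
    ∃ h, ABoxHom h A B := by
  obtain ⟨I, hI, hIA⟩ := hA
  have labelled (a : ℕ) : ∃ b ∈ homLabels B, I.indI a ∈ I.concI (N + b) := by
    obtain ⟨C, hC, ha⟩ := Interp.mem_cSem_disj.1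
      (hI _ (mem_homOntology.2 (Or.inl rfl)) (Set.mem_univ (I.indI a)))
    obtain ⟨b, hb, rfl⟩ := List.mem_map.1 hC
    exact ⟨b, Finset.mem_toList.1 hb, ha⟩
  choose g hgB hg using labelled
  refine ⟨g, fun P a ha => ?_, fun r a b hab => ?_⟩
  · by_contra hnot
    exact hI.notMem_cSem (mem_homOntology.2 (Or.inr (Or.inl
      ⟨g a, hgB a, P, hSC (mem_ABoxCNs_of_conc ha), hnot, rfl⟩))) ⟨hg a, hIA _ ha⟩
  · by_contra hnot
    exact hI.notMem_cSem (mem_homOntology.2 (Or.inr (Or.inr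
      ⟨g a, hgB a, g b, hgB b, r, hSR (mem_ABoxRNs_of_role hab), hnot, rfl⟩)))
      ⟨hg a, I.indI b, hIA _ hab, hg b⟩

end HomOntology

theorem exists_fitsCons_of_forall_not_aboxHom (L : DL) {Ep En : Finset ABox}
    (hnohom : ∀ A ∈ En, ¬ ∃ h, ABoxHom h A (Ep.sup id)) :
    ∃ O : Ontology, OntologyInLang L O ∧ FitsCons O Ep En := by
  set B := Ep.sup id
  set SC := En.sup ABoxCNs
  set SR := En.sup ABoxRNs
  have hN : ∀ P ∈ ABoxCNs B ∪ SC, P < (ABoxCNs B ∪ SC).sup id + 1 :=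
    fun P hP => Nat.lt_succ_of_le (Finset.le_sup (f := id) hP)
  refine ⟨homOntology B SC SR _, .of_alc L homOntology_inLang_alc,
    fun X hX => (consistentWith_homOntology hN).of_subset (Finset.le_sup (f := id) hX),
    fun A hA hcons => hnohom A hA ?_⟩
  exact exists_aboxHom_of_consistentWith_homOntology (Finset.le_sup hA) (Finset.le_sup hA) hcons

theorem exists_fitsCons_empty_left (L : DL) (En : Finset ABox) :
    ∃ O : Ontology, OntologyInLang L O ∧ FitsCons O ∅ En := by
  refine ⟨{(.top, .bot)}, .of_alc L ?_, by simp, fun A _ ⟨I, hI, _⟩ => ?_⟩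
  · simp [OntologyInLang, Concept.bot, Concept.invFree, Concept.countFree]
  · exact hI.notMem_cSem (Finset.mem_singleton_self _) (Set.mem_univ (I.indI 0))

/-- A collection of labeled ABox examples admits a fitting
`L`-ontology iff for every single negative example `A ∈ E⁻`, the collection
`(E⁺, {A})` admits a fitting `L`-ontology. -/
theorem consistency_fitting_single_negatives (L : DL) (Ep En : Finset ABox)
    (hdisj : PairwiseDisjInds (Ep ∪ En)) :
    (∃ O : Ontology, OntologyInLang L O ∧ FitsCons O Ep En) ↔
      (∀ A ∈ En, ∃ O : Ontology, OntologyInLang L O ∧ FitsCons O Ep {A}) := by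
  constructor
  · rintro ⟨O, hL, hpos, hneg⟩ A hA
    exact ⟨O, hL, hpos, by simpa using hneg A hA⟩
  · intro hsingle
    rcases Ep.eq_empty_or_nonempty with rfl | hne
    · exact exists_fitsCons_empty_left L En
    refine exists_fitsCons_of_forall_not_aboxHom L fun A hA => ?_
    obtain ⟨O, hL, hfit⟩ := hsingle A hA
    exact not_exists_aboxHom_of_fitsCons (hdisj.mono Finset.subset_union_left) hne hL hfit

end DLFit
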